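/- Let A = HW ∈ ℝ^{N_r×N_s}, R_x = σ_x² I, R_ω = σ_ω² I, and Q = (σ_x²/σ_ω²) Aᵀ, and let MSE = tr(QAσ_x²(QA)ᵀ) + σ_ω² tr(QQᵀ) + σ_x² N_s − 2σ_x² tr(QA). Then MSE/(σ_x² N_s) ≤ 1 − (N_r/N_s)( σ_x²‖A‖_F²/(σ_ω² N_r) − σ_x⁴‖A‖_F⁴/(σ_ω⁴ N_r) ). -/

import Mathlib

open Matrix

/-- Squared Frobenius norm. -/
def frobSq {m n : ℕ} (A : Matrix (Fin m) (Fin n) ℝ) : ℝ :=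
  ∑ i, ∑ j, (A i j) ^ 2

lemma trace_mul_transpose {m n : ℕ} (M : Matrix (Fin m) (Fin n) ℝ) :
    Matrix.trace (M * Mᵀ) = frobSq M := by
  simp [Matrix.trace, Matrix.mul_apply, frobSq, Matrix.diag, sq]

lemma trace_transpose_mul {m n : ℕ} (M : Matrix (Fin m) (Fin n) ℝ) :
    Matrix.trace (Mᵀ * M) = frobSq M := by
  simp [Matrix.trace, Matrix.mul_apply, frobSq, Matrix.diag, sq]
  exact Finset.sum_comm ..

lemma frobSq_AtA_le {m n : ℕ} (A : Matrix (Fin m) (Fin n) ℝ) :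
    frobSq (Aᵀ * A) ≤ (frobSq A) ^ 2 := by
  have hF : frobSq A = ∑ j, ∑ i, (A i j) ^ 2 := by unfold frobSq; rw [Finset.sum_comm]
  rw [hF]
  unfold frobSq
  rw [sq, Finset.sum_mul_sum]
  apply Finset.sum_le_sum
  intro j _
  apply Finset.sum_le_sum
  intro k _
  have h := Finset.sum_mul_sq_le_sq_mul_sq Finset.univ
      (fun i : Fin m => A i j) (fun i : Fin m => A i k)
  calc ((Aᵀ * A) j k) ^ 2 = (∑ i, A i j * A i k) ^ 2 := by
        simp [Matrix.mul_apply]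
    _ ≤ (∑ i, (A i j) ^ 2) * (∑ i, (A i k) ^ 2) := h

theorem stmt16 (Nr Ns : ℕ) (hNr : 0 < Nr) (hNs : 0 < Ns)
    (A : Matrix (Fin Nr) (Fin Ns) ℝ) (σx σω : ℝ) (hσx : 0 < σx) (hσω : 0 < σω)
    (Q : Matrix (Fin Ns) (Fin Nr) ℝ) (hQ : Q = (σx ^ 2 / σω ^ 2) • Aᵀ)
    (MSE : ℝ)
    (hMSE : MSE = σx ^ 2 * Matrix.trace (Q * A * (Q * A)ᵀ)
        + σω ^ 2 * Matrix.trace (Q * Qᵀ) + σx ^ 2 * Ns - 2 * σx ^ 2 * Matrix.trace (Q * A)) :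
    MSE / (σx ^ 2 * Ns) ≤
      1 - ((Nr : ℝ) / Ns) * (σx ^ 2 * frobSq A / (σω ^ 2 * Nr)
        - σx ^ 4 * (frobSq A) ^ 2 / (σω ^ 4 * Nr)) := by
  set c : ℝ := σx ^ 2 / σω ^ 2 with hc
  set F : ℝ := frobSq A with hF
  set F2 : ℝ := frobSq (Aᵀ * A) with hF2
  have hQA : Q * A = c • (Aᵀ * A) := by rw [hQ, Matrix.smul_mul]
  have ht1 : Matrix.trace (Q * A * (Q * A)ᵀ) = c ^ 2 * F2 := by
    rw [hQA]
    rw [Matrix.transpose_smul, Matrix.smul_mul, Matrix.mul_smul, smul_smul, Matrix.trace_smul,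
      trace_mul_transpose, smul_eq_mul, sq]
  have ht2 : Matrix.trace (Q * Qᵀ) = c ^ 2 * F := by
    rw [hQ, Matrix.transpose_smul, Matrix.smul_mul, Matrix.mul_smul, smul_smul,
      Matrix.trace_smul, Matrix.transpose_transpose, trace_transpose_mul, smul_eq_mul, sq]
  have ht3 : Matrix.trace (Q * A) = c * F := by
    rw [hQA, Matrix.trace_smul, trace_transpose_mul, smul_eq_mul]
  have hσx2 : (0:ℝ) < σx ^ 2 := by positivity
  have hσω2 : (0:ℝ) < σω ^ 2 := by positivity
  have hNs' : (0:ℝ) < (Ns : ℝ) := by exact_mod_cast hNs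
  have hNr' : (0:ℝ) < (Nr : ℝ) := by exact_mod_cast hNr
  have hkey : F2 ≤ F ^ 2 := frobSq_AtA_le A
  have hden : (0:ℝ) < σx ^ 2 * Ns := by positivity
  rw [div_le_iff₀ hden, hMSE, ht1, ht2, ht3]
  have hc' : σω ^ 2 * c = σx ^ 2 := by
    rw [hc]
    field_simp [hc]
  have hRHS : (1 - ((Nr : ℝ) / Ns) * (σx ^ 2 * F / (σω ^ 2 * Nr)
        - σx ^ 4 * F ^ 2 / (σω ^ 4 * Nr))) * (σx ^ 2 * Ns)
      = σx ^ 2 * Ns - σx ^ 2 * (c * F) + σx ^ 2 * (c ^ 2 * F ^ 2) := by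
    rw [hc]
    field_simp [hc]
    ring
  rw [hRHS]
  have h1 : σx ^ 2 * (c ^ 2 * F2) ≤ σx ^ 2 * (c ^ 2 * F ^ 2) := by
    apply mul_le_mul_of_nonneg_left _ (le_of_lt hσx2)
    exact mul_le_mul_of_nonneg_left hkey (by positivity)
  have h2 : σω ^ 2 * (c ^ 2 * F) = σx ^ 2 * (c * F) := by
    rw [sq c]; rw [show σω ^ 2 * (c * c * F) = (σω ^ 2 * c) * (c * F) by ring, hc']
  linarith [h1, h2]
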